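/- Let R be a noetherian commutative ring satisfying (G₀) and (S₂), let M be a finitely generated torsion R-module, and let r ∈ R be a regular element that is M-regular. Then for every prime ideal 𝔯 of R with ht(𝔯) ≤ 1 and r ∈ 𝔯, the localized module M ⊗_R R_𝔯 vanishes. -/

import Mathlib

section Defs2
variable (R : Type*) [CommRing R]

/-- `DepthGE A n` : the local ring `A` has depth at least `n`, i.e. there is a regular
sequence of length `n` contained in the maximal ideal. -/
def DepthGE (A : Type*) [CommRing A] [IsLocalRing A] (n : ℕ) : Prop :=
  ∃ rs : List A, rs.length = n ∧ (∀ r ∈ rs, r ∈ IsLocalRing.maximalIdeal A) ∧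
    RingTheory.Sequence.IsRegular A rs

/-- The height of a prime ideal. -/
noncomputable def primeHt (𝔯 : Ideal R) (h : 𝔯.IsPrime) : ℕ∞ :=
  Order.height (⟨𝔯, h⟩ : PrimeSpectrum R)

/-- Condition (G₀): the localization of `R` at every prime of height `0` is Gorenstein
(for a zero-dimensional local ring, Gorenstein means self-injective). -/
def CondG0 : Prop :=
  ∀ (𝔯 : Ideal R) (h : 𝔯.IsPrime), primeHt R 𝔯 h ≤ 0 →
    Module.Injective (Localization.AtPrime 𝔯) (Localization.AtPrime 𝔯)

/-- Serre's condition (Sₙ): `depth R_𝔯 ≥ min {n, ht 𝔯}` for every prime `𝔯`. -/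
def CondS (n : ℕ) : Prop :=
  ∀ (𝔯 : Ideal R) (h : 𝔯.IsPrime) (m : ℕ),
    (m : ℕ∞) ≤ min (n : ℕ∞) (primeHt R 𝔯 h) → DepthGE (Localization.AtPrime 𝔯) m

/-- The canonical map `I** → R** = R` for an ideal `I ⊆ R`. -/
noncomputable def bidualToRing (I : Ideal R) :
    Module.Dual R (Module.Dual R I) →ₗ[R] R where
  toFun φ := φ ((Submodule.subtype I).dualMap (LinearMap.id : R →ₗ[R] R))
  map_add' := by intros; rfl
  map_smul' := by intros; rfl
end Defs2

/-!
If `M_𝔯 ≠ 0`, pulling back an associated prime of `M_𝔯` gives an associated prime `q ⊆ 𝔯` of `M`.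
As `q ⊇ Ann M` contains a non-zero-divisor, `q` is not a minimal prime, so `1 ≤ ht q` and
`ht 𝔯 ≤ 1` force `q = 𝔯`. But then `r ∈ q` annihilates a nonzero element of `M`.
-/

lemma Module.exists_mem_associatedPrimes_le_of_nontrivial_localizedModule {R M : Type*}
    [CommRing R] [IsNoetherianRing R] [AddCommGroup M] [Module R M] (p : Ideal R) [p.IsPrime]
    [Nontrivial (LocalizedModule p.primeCompl M)] :
    ∃ q ∈ associatedPrimes R M, q ≤ p := by
  obtain ⟨Q, hQ⟩ := associatedPrimes.nonempty (Localization.AtPrime p)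
    (LocalizedModule p.primeCompl M)
  refine ⟨Q.comap (algebraMap R _),
    associatedPrimes.comap_mem_associatedPrimes_of_mem_associatedPrimes_of_isLocalizedModule_of_fg
      p.primeCompl (LocalizedModule.mkLinearMap p.primeCompl M) Q hQ (IsNoetherian.noetherian _),
    ?_⟩
  calc Q.comap (algebraMap R _) ≤ (IsLocalRing.maximalIdeal _).comap (algebraMap R _) :=
        Ideal.comap_mono (IsLocalRing.le_maximalIdeal hQ.isPrime.ne_top)
    _ = p := Localization.AtPrime.under_maximalIdeal

lemma Ideal.one_le_height_of_mem_nonZeroDivisors {R : Type*} [CommRing R] {I : Ideal R} {a : R}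
    (ha : a ∈ nonZeroDivisors R) (haI : a ∈ I) : 1 ≤ I.height :=
  (one_le_height_span_singleton_of_mem_nonZeroDivisors ha).trans
    (height_mono ((span_singleton_le_iff_mem I).mpr haI))

theorem localization_vanishes (R : Type*) [CommRing R] [IsNoetherianRing R]
    (M : Type*) [AddCommGroup M] [Module R M]
    (htors : ∃ a ∈ nonZeroDivisors R, ∀ m : M, a • m = 0)
    (r : R)
    (hreg : Function.Injective (fun m : M => r • m))
    (𝔯 : Ideal R) (h𝔯 : 𝔯.IsPrime) (hht : primeHt R 𝔯 h𝔯 ≤ 1) (hr𝔯 : r ∈ 𝔯) :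
    Subsingleton (LocalizedModule 𝔯.primeCompl M) := by
  obtain ⟨a, ha, haM⟩ := htors
  rw [← not_nontrivial_iff_subsingleton]
  intro
  obtain ⟨q, hq, hq𝔯⟩ :=
    Module.exists_mem_associatedPrimes_le_of_nontrivial_localizedModule (M := M) 𝔯
  have := hq.isPrime
  have haq : a ∈ q := hq.annihilator_le (by simp [Submodule.mem_annihilator, haM])
  have hq_eq : q = 𝔯 := q.eq_of_le_of_height_le hq𝔯 <| calc
    𝔯.height = primeHt R 𝔯 h𝔯 := PrimeSpectrum.height_eq_orderHeight ⟨𝔯, h𝔯⟩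
    _ ≤ 1 := hht
    _ ≤ q.height := Ideal.one_le_height_of_mem_nonZeroDivisors ha haq
  have hr_zd : r ∈ {r : R | ∃ x : M, x ≠ 0 ∧ r • x = 0} :=
    biUnion_associatedPrimes_eq_zero_divisors R M ▸ Set.mem_biUnion hq (hq_eq ▸ hr𝔯)
  obtain ⟨x, hx, hrx⟩ := hr_zd
  exact hx (hreg (by simpa using hrx))
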